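/- Row-sum bound for hard thresholding under weak sparsity: suppose for each index s, |x_s − v_s| ≤ τ/2, Σ_s |v_s|^α ≤ c with α ∈ (0,1), and define e_s = x_s·1{|x_s| ≥ τ} − v_s. Then Σ_s |e_s| ≤ (τ/2)·(2/τ)^α·c + ((3/2)τ)^{1−α}·c, hence Σ_s |e_s| ≤ C·c·τ^{1−α} for a universal constant C. -/

import Mathlib

open Finset

lemma rpow_le_affine (a t : ℝ) (ha : 0 < a) (h0 : 0 ≤ t) (h1 : t ≤ 1) :
    a ^ t ≤ 1 - t + t * a := by
  have h := convexOn_exp.2 (Set.mem_univ (0:ℝ)) (Set.mem_univ (Real.log a))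
    (by linarith : (0:ℝ) ≤ 1 - t) h0 (by ring)
  simp only [smul_eq_mul, mul_zero, zero_add, Real.exp_zero, mul_one,
    Real.exp_log ha] at h
  rw [Real.rpow_def_of_pos ha, mul_comm]; exact h

/-- Row-sum bound for hard thresholding under weak ℓ^α sparsity:
if |x_s − v_s| ≤ τ/2 for all s, Σ_s |v_s|^α ≤ c with α ∈ (0,1), and
e_s = x_s·1{|x_s| ≥ τ} − v_s, then
Σ_s |e_s| ≤ (τ/2)·(2/τ)^α·c + ((3/2)τ)^{1−α}·c ≤ 2·c·τ^{1−α}. -/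
theorem hard_threshold_rowsum_bound
    (n : ℕ) (α τ c : ℝ) (hα0 : 0 < α) (hα1 : α < 1) (hτ : 0 < τ) (hc : 0 ≤ c)
    (x v : Fin n → ℝ) (hxv : ∀ s, |x s - v s| ≤ τ / 2)
    (hsum : ∑ s, |v s| ^ α ≤ c) :
    (∑ s, |(if τ ≤ |x s| then x s else 0) - v s| ≤
        τ / 2 * (2 / τ) ^ α * c + ((3 / 2) * τ) ^ (1 - α) * c) ∧
      (∑ s, |(if τ ≤ |x s| then x s else 0) - v s| ≤ 2 * c * τ ^ (1 - α)) := by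
  set K : ℝ := τ / 2 * (2 / τ) ^ α + ((3 / 2) * τ) ^ (1 - α) with hK
  have h2τ : (0:ℝ) ≤ (2 / τ) ^ α := Real.rpow_nonneg (by positivity) _
  have h32 : (0:ℝ) ≤ ((3 / 2) * τ) ^ (1 - α) := Real.rpow_nonneg (by positivity) _
  have hKpos : 0 ≤ K := by positivity
  -- per-term bound
  have hterm : ∀ s : Fin n, |(if τ ≤ |x s| then x s else 0) - v s| ≤ K * |v s| ^ α := by
    intro s
    have hw : (0:ℝ) ≤ |v s| ^ α := Real.rpow_nonneg (abs_nonneg _) _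
    by_cases h : τ ≤ |x s|
    · rw [if_pos h]
      have hv : τ / 2 ≤ |v s| := by
        have := abs_sub_abs_le_abs_sub (x s) (v s)
        have := hxv s
        linarith
      have h1 : (1:ℝ) ≤ (2 / τ * |v s|) ^ α := by
        apply Real.one_le_rpow ?_ hα0.le
        rw [div_mul_eq_mul_div, le_div_iff₀ hτ, one_mul]
        linarith
      rw [Real.mul_rpow (by positivity) (abs_nonneg _)] at h1
      have : τ / 2 * 1 ≤ τ / 2 * ((2 / τ) ^ α * |v s| ^ α) := by
        apply mul_le_mul_of_nonneg_left h1 (by positivity)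
      calc |x s - v s| ≤ τ / 2 := hxv s
        _ = τ / 2 * 1 := by ring
        _ ≤ τ / 2 * ((2 / τ) ^ α * |v s| ^ α) := this
        _ ≤ K * |v s| ^ α := by
            rw [hK]; nlinarith [mul_nonneg h32 hw]
    · rw [if_neg h]
      push_neg at h
      have hv : |v s| ≤ 3 / 2 * τ := by
        have := abs_sub_abs_le_abs_sub (v s) (x s)
        have h2 := hxv s
        rw [abs_sub_comm] at h2
        linarith
      have hsplit : |v s| = |v s| ^ α * |v s| ^ (1 - α) := by
        rw [← Real.rpow_add' (abs_nonneg _) (by norm_num)]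
        simp
      have hle : |v s| ^ (1 - α) ≤ ((3 / 2) * τ) ^ (1 - α) :=
        Real.rpow_le_rpow (abs_nonneg _) hv (by linarith)
      calc |0 - v s| = |v s| := by rw [zero_sub, abs_neg]
        _ = |v s| ^ α * |v s| ^ (1 - α) := hsplit
        _ ≤ |v s| ^ α * (((3 / 2) * τ) ^ (1 - α)) :=
            mul_le_mul_of_nonneg_left hle hw
        _ ≤ K * |v s| ^ α := by
            rw [hK]; nlinarith [mul_nonneg h2τ hw, mul_nonneg hw (mul_nonneg hτ.le (by norm_num : (0:ℝ) ≤ 1/2))]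
  have hmain : ∑ s, |(if τ ≤ |x s| then x s else 0) - v s| ≤ K * c := by
    calc ∑ s, |(if τ ≤ |x s| then x s else 0) - v s|
        ≤ ∑ s, K * |v s| ^ α := Finset.sum_le_sum fun s _ => hterm s
      _ = K * ∑ s, |v s| ^ α := by rw [Finset.mul_sum]
      _ ≤ K * c := mul_le_mul_of_nonneg_left hsum hKpos
  have hKc : K * c = τ / 2 * (2 / τ) ^ α * c + ((3 / 2) * τ) ^ (1 - α) * c := by ring
  refine ⟨by rw [← hKc]; exact hmain, ?_⟩
  -- second bound: K ≤ 2 * τ^(1-α)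
  have hτ1α : (0:ℝ) ≤ τ ^ (1 - α) := Real.rpow_nonneg hτ.le _
  have hK2 : K ≤ 2 * τ ^ (1 - α) := by
    have e1 : τ / 2 * (2 / τ) ^ α = 2 ^ α / 2 * τ ^ (1 - α) := by
      rw [Real.div_rpow (by norm_num) hτ.le, Real.rpow_sub hτ, Real.rpow_one]
      field_simp
    have e2 : ((3 / 2) * τ) ^ (1 - α) = (3 / 2) ^ (1 - α) * τ ^ (1 - α) := by
      rw [Real.mul_rpow (by norm_num) hτ.le]
    have b1 : (2:ℝ) ^ α ≤ 1 + α := by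
      have := rpow_le_affine 2 α (by norm_num) hα0.le hα1.le
      linarith
    have b2 : ((3:ℝ) / 2) ^ (1 - α) ≤ 3 / 2 - α / 2 := by
      have := rpow_le_affine (3/2) (1 - α) (by norm_num) (by linarith) (by linarith)
      linarith
    have hcoef : 2 ^ α / 2 + (3/2 : ℝ) ^ (1 - α) ≤ 2 := by linarith
    rw [hK, e1, e2]
    nlinarith [mul_le_mul_of_nonneg_right hcoef hτ1α]
  calc ∑ s, |(if τ ≤ |x s| then x s else 0) - v s| ≤ K * c := hmain
    _ ≤ 2 * τ ^ (1 - α) * c := mul_le_mul_of_nonneg_right hK2 hc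
    _ = 2 * c * τ ^ (1 - α) := by ring
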